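/- arXiv:2403.15219 — 9 statements merged into one kernel-verified Lean document; each statement's English description precedes it below -/
import Mathlib

section
/- Suppose for every period t = 1,…,T the real-time charging power p^c_t and discharging power p^d_t satisfy p̲^{DA,c}_t ≤ p^c_t ≤ p̄^{DA,c}_t and p̲^{DA,d}_t ≤ p^d_t ≤ p̄^{DA,d}_t, and the initial state of charge satisfies E̲^{DA}_0 ≤ E_0 ≤ Ē^{DA}_0. Then for every t = 1,…,T the real-time state of charge satisfies E̲^{DA}_t ≤ E_t ≤ Ē^{DA}_t, and in particular E̲ ≤ E_t ≤ Ē, even though the physical SOC range [E̲, Ē] is not imposed on the real-time problem. -/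
/-- Proposition 1, SOC feasibility.
If for every period `t = 1, …, T` the real-time charging power `pc t` and discharging
power `pd t` stay within the day-ahead bounds, and the initial SOC lies within the
day-ahead SOC bounds, then for every `t = 1, …, T` the real-time SOC `E t` stays within
the day-ahead SOC bounds `[EloDA t, EhiDA t]`, and in particular within the physical
range `[Elo, Ehi]`, even though the latter is not imposed on the real-time problem. -/
theorem soc_always_in_bounds
    (T : ℕ) (hT : 1 ≤ T)
    (ηc ηd Δt : ℝ) (hηc : 0 < ηc) (hηd : 0 < ηd) (hΔt : 0 < Δt)
    (Elo Ehi : ℝ) (hEloEhi : Elo ≤ Ehi)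
    -- day-ahead bounds on charging/discharging power
    (ploc phic plod phid : ℕ → ℝ)
    (hpcb : ∀ t, 1 ≤ t → t ≤ T → ploc t ≤ phic t)
    (hpdb : ∀ t, 1 ≤ t → t ≤ T → plod t ≤ phid t)
    -- day-ahead SOC bounds and their recursions
    (EloDA EhiDA : ℕ → ℝ)
    (hloRec : ∀ t, 1 ≤ t → t ≤ T →
      EloDA t = EloDA (t - 1) + (ploc t * ηc - phid t / ηd) * Δt)
    (hhiRec : ∀ t, 1 ≤ t → t ≤ T →
      EhiDA t = EhiDA (t - 1) + (phic t * ηc - plod t / ηd) * Δt)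
    (hphys : ∀ t, t ≤ T → Elo ≤ EloDA t ∧ EloDA t ≤ EhiDA t ∧ EhiDA t ≤ Ehi)
    -- real-time charging/discharging power within the day-ahead bounds
    (pc pd : ℕ → ℝ)
    (hpc : ∀ t, 1 ≤ t → t ≤ T → ploc t ≤ pc t ∧ pc t ≤ phic t)
    (hpd : ∀ t, 1 ≤ t → t ≤ T → plod t ≤ pd t ∧ pd t ≤ phid t)
    -- real-time SOC evolution
    (E : ℕ → ℝ)
    (hE0 : EloDA 0 ≤ E 0 ∧ E 0 ≤ EhiDA 0)
    (hErec : ∀ t, 1 ≤ t → t ≤ T →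
      E t = E (t - 1) + (pc t * ηc - pd t / ηd) * Δt) :
    ∀ t, 1 ≤ t → t ≤ T →
      (EloDA t ≤ E t ∧ E t ≤ EhiDA t) ∧ (Elo ≤ E t ∧ E t ≤ Ehi) := by
  have key : ∀ t, t ≤ T → EloDA t ≤ E t ∧ E t ≤ EhiDA t := by
    intro t
    induction t with
    | zero => intro _; exact hE0
    | succ n ih =>
      intro hle
      have hn : n ≤ T := Nat.le_of_succ_le hle
      have ihn := ih hn
      have h1 : 1 ≤ n + 1 := Nat.le_add_left 1 n
      have hsub : n + 1 - 1 = n := rfl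
      have hlo := hloRec (n+1) h1 hle
      have hhi := hhiRec (n+1) h1 hle
      have hErec' := hErec (n+1) h1 hle
      rw [hsub] at hlo hhi hErec'
      obtain ⟨hc1, hc2⟩ := hpc (n+1) h1 hle
      obtain ⟨hd1, hd2⟩ := hpd (n+1) h1 hle
      constructor
      · rw [hlo, hErec']
        have hstep : (ploc (n+1) * ηc - phid (n+1) / ηd) * Δt
            ≤ (pc (n+1) * ηc - pd (n+1) / ηd) * Δt := by
          apply mul_le_mul_of_nonneg_right _ hΔt.le
          apply sub_le_sub
          · exact mul_le_mul_of_nonneg_right hc1 hηc.le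
          · gcongr
        linarith [ihn.1]
      · rw [hhi, hErec']
        have hstep : (pc (n+1) * ηc - pd (n+1) / ηd) * Δt
            ≤ (phic (n+1) * ηc - plod (n+1) / ηd) * Δt := by
          apply mul_le_mul_of_nonneg_right _ hΔt.le
          apply sub_le_sub
          · exact mul_le_mul_of_nonneg_right hc2 hηc.le
          · gcongr
        linarith [ihn.2]
  intro t _ hle
  obtain ⟨h1, h2⟩ := key t hle
  obtain ⟨p1, p2, p3⟩ := hphys t hle
  exact ⟨⟨h1, h2⟩, ⟨le_trans p1 h1, le_trans h2 p3⟩⟩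
end

section
/- Suppose for every period t = 1,…,T the real-time charging power p^c_t and discharging power p^d_t satisfy p̲^{DA,c}_t ≤ p^c_t ≤ p̄^{DA,c}_t and p̲^{DA,d}_t ≤ p^d_t ≤ p̄^{DA,d}_t, the initial state of charge satisfies E̲^{DA}_0 ≤ E_0 ≤ Ē^{DA}_0, and the terminal day-ahead bounds satisfy −Δ ≤ E̲^{DA}_T − E_0 and Ē^{DA}_T − E_0 ≤ Δ for some Δ ≥ 0. Then the terminal real-time SOC satisfies |E_T − E_0| ≤ Δ. -/
/-- terminal SOC deviation bound.
If the real-time charging/discharging powers stay within the day-ahead bounds, the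
initial SOC lies within the day-ahead SOC bounds, and the terminal day-ahead SOC
bounds deviate from the initial SOC by at most `Δ ≥ 0`, then the terminal real-time
SOC satisfies `|E T − E 0| ≤ Δ`. -/
theorem terminal_soc_deviation_bound
    (T : ℕ) (hT : 1 ≤ T)
    (ηc ηd Δt : ℝ) (hηc : 0 < ηc) (hηd : 0 < ηd) (hΔt : 0 < Δt)
    (Elo Ehi : ℝ) (hEloEhi : Elo ≤ Ehi)
    -- day-ahead bounds on charging/discharging power
    (ploc phic plod phid : ℕ → ℝ)
    (hpcb : ∀ t, 1 ≤ t → t ≤ T → ploc t ≤ phic t)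
    (hpdb : ∀ t, 1 ≤ t → t ≤ T → plod t ≤ phid t)
    -- day-ahead SOC bounds and their recursions
    (EloDA EhiDA : ℕ → ℝ)
    (hloRec : ∀ t, 1 ≤ t → t ≤ T →
      EloDA t = EloDA (t - 1) + (ploc t * ηc - phid t / ηd) * Δt)
    (hhiRec : ∀ t, 1 ≤ t → t ≤ T →
      EhiDA t = EhiDA (t - 1) + (phic t * ηc - plod t / ηd) * Δt)
    (hphys : ∀ t, t ≤ T → Elo ≤ EloDA t ∧ EloDA t ≤ EhiDA t ∧ EhiDA t ≤ Ehi)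
    -- real-time charging/discharging power within the day-ahead bounds
    (pc pd : ℕ → ℝ)
    (hpc : ∀ t, 1 ≤ t → t ≤ T → ploc t ≤ pc t ∧ pc t ≤ phic t)
    (hpd : ∀ t, 1 ≤ t → t ≤ T → plod t ≤ pd t ∧ pd t ≤ phid t)
    -- real-time SOC evolution
    (E : ℕ → ℝ)
    (hE0 : EloDA 0 ≤ E 0 ∧ E 0 ≤ EhiDA 0)
    (hErec : ∀ t, 1 ≤ t → t ≤ T →
      E t = E (t - 1) + (pc t * ηc - pd t / ηd) * Δt)
    -- terminal day-ahead bounds deviate from the initial SOC by at most Δ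
    (Δ : ℝ) (hΔ : 0 ≤ Δ)
    (hTermLo : -Δ ≤ EloDA T - E 0) (hTermHi : EhiDA T - E 0 ≤ Δ) :
    |E T - E 0| ≤ Δ := by
  have key : ∀ t, t ≤ T → EloDA t ≤ E t ∧ E t ≤ EhiDA t := by
    intro t
    induction t with
    | zero => intro _; exact hE0
    | succ n ih =>
      intro hle
      have hn : n ≤ T := Nat.le_of_succ_le hle
      have ihn := ih hn
      have h1 : 1 ≤ n + 1 := Nat.le_add_left 1 n
      have hs : n + 1 - 1 = n := rfl
      have hEr := hErec (n+1) h1 hle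
      have hlo := hloRec (n+1) h1 hle
      have hhi := hhiRec (n+1) h1 hle
      rw [hs] at hEr hlo hhi
      have hc := hpc (n+1) h1 hle
      have hd := hpd (n+1) h1 hle
      have hdinv : (0:ℝ) < 1/ηd := by positivity
      constructor
      · rw [hEr, hlo]
        have h2 : ploc (n+1) * ηc ≤ pc (n+1) * ηc :=
          mul_le_mul_of_nonneg_right hc.1 hηc.le
        have h3 : pd (n+1) / ηd ≤ phid (n+1) / ηd :=
          div_le_div_of_nonneg_right hd.2 hηd.le
        nlinarith [ihn.1, mul_le_mul_of_nonneg_right (sub_le_sub h2 h3) hΔt.le]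
      · rw [hEr, hhi]
        have h2 : pc (n+1) * ηc ≤ phic (n+1) * ηc :=
          mul_le_mul_of_nonneg_right hc.2 hηc.le
        have h3 : plod (n+1) / ηd ≤ pd (n+1) / ηd :=
          div_le_div_of_nonneg_right hd.1 hηd.le
        nlinarith [ihn.2, mul_le_mul_of_nonneg_right (sub_le_sub h2 h3) hΔt.le]
  have hk := key T le_rfl
  rw [abs_le]
  constructor <;> linarith [hk.1, hk.2]
end

section
/- If (d̂, q̂, η̂) is a saddle point of the Lagrangian L, then setting d* = d̂, λ* = η̂, q* = q̂, and b*_k = a η̂_k + q̂_k for all k ∈ K yields an energy sharing market equilibrium (d*, b*, q*, λ*). In particular, if the Lagrangian admits a saddle point, an energy sharing market equilibrium exists. -/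
open Finset

variable {K : Type*} [Fintype K]

/-- `(d, b, q)` is optimal for customer `k`'s problem at price `lam`:
minimize `U k d + lam * q` subject to `q = -a*lam + b`, `w k + q = d + df k`,
and `Dlo k ≤ d ≤ Dhi k`. -/
def CustomerOpt (U : K → ℝ → ℝ) (df w Dlo Dhi : K → ℝ) (a : ℝ)
    (k : K) (lam d b q : ℝ) : Prop :=
  q = -a * lam + b ∧ w k + q = d + df k ∧ Dlo k ≤ d ∧ d ≤ Dhi k ∧
    ∀ d' b' q' : ℝ, q' = -a * lam + b' → w k + q' = d' + df k →
      Dlo k ≤ d' → d' ≤ Dhi k → U k d + lam * q ≤ U k d' + lam * q'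

/-- `lam` is optimal for the operator's problem given bids `b`:
minimize `∑ k, (lam k)^2` subject to `(fun k => -a * lam k + b k) ∈ F`. -/
def OperatorOpt (a : ℝ) (F : Set (K → ℝ)) (b lam : K → ℝ) : Prop :=
  (fun k => -a * lam k + b k) ∈ F ∧
    ∀ lam' : K → ℝ, (fun k => -a * lam' k + b k) ∈ F →
      ∑ k, (lam k) ^ 2 ≤ ∑ k, (lam' k) ^ 2

/-- `(d, b, q, lam)` is an energy sharing market equilibrium. -/
def IsEquilibrium (U : K → ℝ → ℝ) (df w Dlo Dhi : K → ℝ) (a : ℝ)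
    (F : Set (K → ℝ)) (d b q lam : K → ℝ) : Prop :=
  (∀ k, CustomerOpt U df w Dlo Dhi a k (lam k) (d k) (b k) (q k)) ∧
    OperatorOpt a F b lam

/-- Feasibility for the centralized problem. -/
def CentralFeasible (df w Dlo Dhi : K → ℝ) (F : Set (K → ℝ)) (d : K → ℝ) : Prop :=
  (∀ k, Dlo k ≤ d k ∧ d k ≤ Dhi k) ∧ (fun k => d k + df k - w k) ∈ F

/-- The Lagrangian of the centralized problem. -/
def Lag (U : K → ℝ → ℝ) (df w : K → ℝ) (d q η : K → ℝ) : ℝ :=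
  ∑ k, U k (d k) + ∑ k, η k * (d k + df k - w k - q k)

/-- `(dh, qh, ηh)` is a saddle point of the Lagrangian. -/
def IsSaddle (U : K → ℝ → ℝ) (df w Dlo Dhi : K → ℝ) (F : Set (K → ℝ))
    (dh qh ηh : K → ℝ) : Prop :=
  (∀ k, Dlo k ≤ dh k ∧ dh k ≤ Dhi k) ∧ qh ∈ F ∧
    (∀ d q : K → ℝ, (∀ k, Dlo k ≤ d k ∧ d k ≤ Dhi k) → q ∈ F →
      Lag U df w dh qh ηh ≤ Lag U df w d q ηh) ∧
    (∀ η : K → ℝ, Lag U df w dh qh η ≤ Lag U df w dh qh ηh)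

lemma sum_swap_one {K : Type*} [Fintype K] (k : K) (f g : K → ℝ)
    (h : ∀ j, j ≠ k → f j = g j) : ∑ j, f j = ∑ j, g j - g k + f k := by
  classical
  rw [← Finset.add_sum_erase _ f (Finset.mem_univ k),
    ← Finset.add_sum_erase _ g (Finset.mem_univ k),
    Finset.sum_congr rfl (fun j hj => h j (Finset.ne_of_mem_erase hj))]
  ring

/-- Proposition 2, existence part.
If `(dh, qh, ηh)` is a saddle point of the Lagrangian, then setting `d* = dh`,
`λ* = ηh`, `q* = qh`, and `b*_k = a * ηh k + qh k` yields an energy sharing market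
equilibrium. In particular, if the Lagrangian admits a saddle point, an energy
sharing market equilibrium exists. -/
theorem saddle_point_yields_equilibrium
    (U : K → ℝ → ℝ) (df w Dlo Dhi : K → ℝ) (a : ℝ) (F : Set (K → ℝ))
    (hU : ∀ k, StrictConvexOn ℝ Set.univ (U k))
    (hUcont : ∀ k, Continuous (U k))
    (ha : 0 < a)
    (hFne : F.Nonempty) (hFclosed : IsClosed F) (hFconvex : Convex ℝ F)
    (hD : ∀ k, Dlo k ≤ Dhi k)
    (dh qh ηh : K → ℝ)
    (hsaddle : IsSaddle U df w Dlo Dhi F dh qh ηh) :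
    IsEquilibrium U df w Dlo Dhi a F dh (fun k => a * ηh k + qh k) qh ηh := by
  classical
  obtain ⟨hbox, hqF, hmin, hmax⟩ := hsaddle
  have hg : ∀ k, dh k + df k - w k - qh k = 0 := by
    intro k
    have h := hmax (fun j => ηh j + if j = k then dh k + df k - w k - qh k else 0)
    have hsum : Lag U df w dh qh
          (fun j => ηh j + if j = k then dh k + df k - w k - qh k else 0)
        = Lag U df w dh qh ηh
          + (dh k + df k - w k - qh k) * (dh k + df k - w k - qh k) := by
      simp only [Lag, add_mul, Finset.sum_add_distrib, ite_mul, zero_mul,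
        Finset.sum_ite_eq', Finset.mem_univ, if_true]
      ring
    rw [hsum] at h
    nlinarith [h, mul_self_nonneg (dh k + df k - w k - qh k)]
  constructor
  · intro k
    refine ⟨by ring, by have := hg k; linarith, (hbox k).1, (hbox k).2, ?_⟩
    intro d' b' q' hq' hbal hlo hhi
    set dnew : K → ℝ := Function.update dh k d' with hdnew
    have hdnewbox : ∀ j, Dlo j ≤ dnew j ∧ dnew j ≤ Dhi j := by
      intro j
      by_cases hj : j = k
      · subst hj; simp [hdnew, hlo, hhi]
      · simp [hdnew, Function.update_of_ne hj, hbox j]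
    have hL := hmin dnew qh hdnewbox hqF
    have h1 : ∑ j, U j (dnew j) = ∑ j, U j (dh j) - U k (dh k) + U k d' := by
      refine (sum_swap_one k (fun j => U j (dnew j)) (fun j => U j (dh j))
        (fun j hj => by simp [hdnew, Function.update_of_ne hj])).trans ?_
      simp [hdnew]
    have h2 : ∑ j, ηh j * (dnew j + df j - w j - qh j)
        = ∑ j, ηh j * (dh j + df j - w j - qh j)
          - ηh k * (dh k + df k - w k - qh k) + ηh k * (d' + df k - w k - qh k) := by
      refine (sum_swap_one k (fun j => ηh j * (dnew j + df j - w j - qh j))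
        (fun j => ηh j * (dh j + df j - w j - qh j))
        (fun j hj => by simp [hdnew, Function.update_of_ne hj])).trans ?_
      simp [hdnew]
    simp only [Lag, h1, h2] at hL
    have he : ηh k * (d' + df k - w k - qh k) = ηh k * q' - ηh k * qh k := by
      rw [show d' + df k - w k - qh k = q' - qh k by linarith]; ring
    have h0 : ηh k * (dh k + df k - w k - qh k) = 0 := by rw [hg k]; ring
    linarith [hL]
  · refine ⟨by simpa using hqF, ?_⟩
    intro lam' hlam'
    have hL := hmin dh (fun j => -a * lam' j + (a * ηh j + qh j)) hbox hlam'
    have hsum0 : ∑ j, ηh j * (dh j + df j - w j - qh j) = 0 :=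
      Finset.sum_eq_zero fun j _ => by rw [hg j]; ring
    have hrhs : ∑ j, ηh j * (dh j + df j - w j - (-a * lam' j + (a * ηh j + qh j)))
        = a * (∑ j, ηh j * lam' j - ∑ j, ηh j ^ 2) := by
      rw [← Finset.sum_sub_distrib, Finset.mul_sum]
      refine Finset.sum_congr rfl fun j _ => ?_
      linear_combination ηh j * hg j
    simp only [Lag, hsum0, hrhs] at hL
    have h2 : ∑ j, ηh j ^ 2 ≤ ∑ j, ηh j * lam' j := by nlinarith [hL, ha]
    have h3 : (0:ℝ) ≤ ∑ j, (lam' j - ηh j) ^ 2 :=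
      Finset.sum_nonneg fun j _ => sq_nonneg _
    have h4 : ∑ j, (lam' j - ηh j) ^ 2
        = ∑ j, (lam' j) ^ 2 - 2 * ∑ j, ηh j * lam' j + ∑ j, ηh j ^ 2 := by
      rw [Finset.mul_sum, ← Finset.sum_sub_distrib, ← Finset.sum_add_distrib]
      exact Finset.sum_congr rfl fun j _ => by ring
    linarith
end

section
/- If (d*, b*, q*, λ*) is an energy sharing market equilibrium, then d* is an optimal solution of the centralized problem, and it is the unique optimal solution of the centralized problem. -/
/-!
At equilibrium the operator's optimality says exactly that the sharing profile `q` is the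
Euclidean projection of the bids `b` onto `F`, and `b - q = a λ`; the obtuse-angle
characterisation of projections turns this into `⟪λ, q' - q⟫ ≤ 0` for every `q' ∈ F`.
Summing the customers' optimality inequalities against a centrally feasible `d'` with sharing
profile `q'` gives `∑ U(d) ≤ ∑ U(d') + ⟪λ, q' - q⟫ ≤ ∑ U(d')`. Uniqueness follows because the
centralized objective is strictly convex on the convex feasible set.
-/

open Finset

variable {K : Type*} [Fintype K]

open scoped InnerProductSpace

theorem real_inner_sub_nonpos_of_isMinOn_norm_sub {E : Type*} [NormedAddCommGroup E]
    [InnerProductSpace ℝ E] {C : Set E} (hC : Convex ℝ C) {u v : E} (hv : v ∈ C)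
    (hmin : IsMinOn (fun w => ‖u - w‖) C v) : ∀ w ∈ C, ⟪u - v, w - v⟫_ℝ ≤ 0 := by
  rw [← norm_eq_iInf_iff_real_inner_le_zero hC hv]
  have : Nonempty C := ⟨⟨v, hv⟩⟩
  exact le_antisymm (le_ciInf fun w => isMinOn_iff.mp hmin w w.2)
    (ciInf_le ⟨0, Set.forall_mem_range.mpr fun _ => norm_nonneg _⟩ (⟨v, hv⟩ : C))

theorem sum_mul_sub_nonpos_of_isMinOn_sum_sq {F : Set (K → ℝ)} (hF : Convex ℝ F)
    {b q : K → ℝ} (hq : q ∈ F) (hmin : IsMinOn (fun q' => ∑ k, (b k - q' k) ^ 2) F q) :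
    ∀ q' ∈ F, ∑ k, (b k - q k) * (q' k - q k) ≤ 0 := by
  have hnorm (x : K → ℝ) : ‖WithLp.toLp 2 x‖ = √(∑ k, x k ^ 2) := by
    simp [EuclideanSpace.norm_eq]
  have hinner (x y : K → ℝ) : ⟪WithLp.toLp 2 x, WithLp.toLp 2 y⟫_ℝ = ∑ k, x k * y k := by
    simp [PiLp.inner_apply, mul_comm]
  set C : Set (EuclideanSpace ℝ K) := WithLp.ofLp ⁻¹' F
  have hC : Convex ℝ C := hF.linear_preimage (WithLp.linearEquiv 2 ℝ (K → ℝ)).toLinearMap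
  have hminC : IsMinOn (fun w => ‖WithLp.toLp 2 b - w‖) C (WithLp.toLp 2 q) := by
    refine isMinOn_iff.mpr fun w hw => ?_
    rw [← WithLp.toLp_ofLp 2 w, ← WithLp.toLp_sub, ← WithLp.toLp_sub, hnorm, hnorm]
    exact Real.sqrt_le_sqrt (isMinOn_iff.mp hmin _ hw)
  intro q' hq'
  have h := real_inner_sub_nonpos_of_isMinOn_norm_sub hC hq hminC (WithLp.toLp 2 q') hq'
  rwa [← WithLp.toLp_sub, ← WithLp.toLp_sub, hinner] at h

theorem OperatorOpt.sum_mul_sub_nonpos {a : ℝ} {F : Set (K → ℝ)} {b lam : K → ℝ}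
    (hop : OperatorOpt a F b lam) (ha : 0 < a) (hF : Convex ℝ F) :
    ∀ q' ∈ F, ∑ k, lam k * (q' k - (-a * lam k + b k)) ≤ 0 := by
  obtain ⟨hq, hlam⟩ := hop
  have hmin : IsMinOn (fun q' => ∑ k, (b k - q' k) ^ 2) F (fun k => -a * lam k + b k) := by
    refine isMinOn_iff.mpr fun q' hq' => ?_
    have hq'_eq : (fun k => -a * ((b k - q' k) / a) + b k) = q' := by
      funext k; field_simp; ring
    have h := hlam (fun k => (b k - q' k) / a) (by rwa [hq'_eq])
    calc ∑ k, (b k - (-a * lam k + b k)) ^ 2 = a ^ 2 * ∑ k, lam k ^ 2 := by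
          rw [mul_sum]; exact sum_congr rfl fun k _ => by ring
      _ ≤ a ^ 2 * ∑ k, ((b k - q' k) / a) ^ 2 := by gcongr
      _ = ∑ k, (b k - q' k) ^ 2 := by
          rw [mul_sum]; exact sum_congr rfl fun k _ => by field_simp
  intro q' hq'
  have h := sum_mul_sub_nonpos_of_isMinOn_sum_sq hF hq hmin q' hq'
  have h_eq : ∑ k, (b k - (-a * lam k + b k)) * (q' k - (-a * lam k + b k))
      = a * ∑ k, lam k * (q' k - (-a * lam k + b k)) := by
    rw [mul_sum]; exact sum_congr rfl fun k _ => by ring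
  exact nonpos_of_mul_nonpos_right (h_eq ▸ h) ha

theorem CustomerOpt.le_of_mem_Icc {ι : Type*} {U : ι → ℝ → ℝ} {df w Dlo Dhi : ι → ℝ} {a : ℝ}
    {k : ι} {lam d b q : ℝ} (hc : CustomerOpt U df w Dlo Dhi a k lam d b q) {d' : ℝ}
    (hlo : Dlo k ≤ d') (hhi : d' ≤ Dhi k) :
    U k d + lam * q ≤ U k d' + lam * (d' + df k - w k) :=
  hc.2.2.2.2 d' (d' + df k - w k + a * lam) _ (by ring) (by ring) hlo hhi

theorem convex_setOf_centralFeasible {ι : Type*} {df w Dlo Dhi : ι → ℝ} {F : Set (ι → ℝ)}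
    (hF : Convex ℝ F) : Convex ℝ {d | CentralFeasible df w Dlo Dhi F d} := by
  have hbox : Convex ℝ (Set.univ.pi fun k => Set.Icc (Dlo k) (Dhi k)) :=
    convex_pi fun k _ => convex_Icc _ _
  have hshift : Convex ℝ ((fun d => (df - w) + d) ⁻¹' F) := hF.translate_preimage_right _
  convert hbox.inter hshift using 1
  ext d
  simp only [CentralFeasible, Set.mem_ofPred_eq, Set.mem_inter_iff, Set.mem_univ_pi,
    Set.mem_Icc, Set.mem_preimage]
  congr! 2
  funext k
  simp only [Pi.add_apply, Pi.sub_apply]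
  ring

theorem strictConvexOn_sum_apply {ι : Type*} [Fintype ι] {f : ι → ℝ → ℝ} {s : ι → Set ℝ}
    (hf : ∀ i, StrictConvexOn ℝ (s i) (f i)) :
    StrictConvexOn ℝ (Set.univ.pi s) (fun x => ∑ i, f i (x i)) := by
  refine ⟨convex_pi fun i _ => (hf i).1, fun x hx y hy hxy α β hα hβ hαβ => ?_⟩
  obtain ⟨j, hj⟩ := Function.ne_iff.mp hxy
  have hx' := Set.mem_univ_pi.mp hx
  have hy' := Set.mem_univ_pi.mp hy
  calc ∑ i, f i ((α • x + β • y) i)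
      < ∑ i, (α • f i (x i) + β • f i (y i)) :=
        sum_lt_sum (fun i _ => (hf i).convexOn.2 (hx' i) (hy' i) hα.le hβ.le hαβ)
          ⟨j, mem_univ j, (hf j).2 (hx' j) (hy' j) hj hα hβ hαβ⟩
    _ = α • ∑ i, f i (x i) + β • ∑ i, f i (y i) := by
        rw [sum_add_distrib, smul_sum, smul_sum]

namespace IsEquilibrium

variable {U : K → ℝ → ℝ} {df w Dlo Dhi : K → ℝ} {a : ℝ} {F : Set (K → ℝ)}
  {d b q lam : K → ℝ}

theorem sharing_eq_bid (heq : IsEquilibrium U df w Dlo Dhi a F d b q lam) (k : K) :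
    -a * lam k + b k = q k :=
  (heq.1 k).1.symm

theorem sharing_eq_netDemand (heq : IsEquilibrium U df w Dlo Dhi a F d b q lam) (k : K) :
    d k + df k - w k = q k := by
  linarith [(heq.1 k).2.1]

theorem centralFeasible (heq : IsEquilibrium U df w Dlo Dhi a F d b q lam) :
    CentralFeasible df w Dlo Dhi F d := by
  refine ⟨fun k => ⟨(heq.1 k).2.2.1, (heq.1 k).2.2.2.1⟩, ?_⟩
  simpa only [heq.sharing_eq_netDemand, heq.sharing_eq_bid] using heq.2.1

theorem isMinOn_centralCost (heq : IsEquilibrium U df w Dlo Dhi a F d b q lam) (ha : 0 < a)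
    (hF : Convex ℝ F) :
    IsMinOn (fun d => ∑ k, U k (d k)) {d | CentralFeasible df w Dlo Dhi F d} d := by
  refine isMinOn_iff.mpr fun d' ⟨hbox, hq'⟩ => ?_
  have hcust : ∑ k, (U k (d k) + lam k * q k)
      ≤ ∑ k, (U k (d' k) + lam k * (d' k + df k - w k)) :=
    sum_le_sum fun k _ => (heq.1 k).le_of_mem_Icc (hbox k).1 (hbox k).2
  have hnormal := heq.2.sum_mul_sub_nonpos ha hF _ hq'
  simp only [heq.sharing_eq_bid] at hnormal
  simp only [mul_sub, sum_sub_distrib, sum_add_distrib] at hcust hnormal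
  linarith

end IsEquilibrium

theorem equilibrium_demand_is_unique_central_optimum_general
    (U : K → ℝ → ℝ) (df w Dlo Dhi : K → ℝ) (a : ℝ) (F : Set (K → ℝ))
    (hU : ∀ k, StrictConvexOn ℝ Set.univ (U k))
    (ha : 0 < a)
    (hFconvex : Convex ℝ F)
    (d b q lam : K → ℝ)
    (heq : IsEquilibrium U df w Dlo Dhi a F d b q lam) :
    (CentralFeasible df w Dlo Dhi F d ∧
      ∀ d' : K → ℝ, CentralFeasible df w Dlo Dhi F d' →
        ∑ k, U k (d k) ≤ ∑ k, U k (d' k)) ∧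
    (∀ d' : K → ℝ,
      (CentralFeasible df w Dlo Dhi F d' ∧
        ∀ d'' : K → ℝ, CentralFeasible df w Dlo Dhi F d'' →
          ∑ k, U k (d' k) ≤ ∑ k, U k (d'' k)) → d' = d) := by
  have hfeas := heq.centralFeasible
  have hmin := isMinOn_iff.mp (heq.isMinOn_centralCost ha hFconvex)
  have hsum : StrictConvexOn ℝ Set.univ (fun d : K → ℝ => ∑ k, U k (d k)) := by
    simpa only [Set.pi_univ] using strictConvexOn_sum_apply hU
  have hstrict : StrictConvexOn ℝ {d | CentralFeasible df w Dlo Dhi F d}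
      (fun d => ∑ k, U k (d k)) :=
    hsum.subset (Set.subset_univ _) (convex_setOf_centralFeasible hFconvex)
  refine ⟨⟨hfeas, hmin⟩, fun d' ⟨hfeas', hmin'⟩ => ?_⟩
  exact hstrict.eq_of_isMinOn (isMinOn_iff.mpr hmin') (isMinOn_iff.mpr hmin) hfeas' hfeas

/-- Proposition 2, uniqueness part.
If `(d, b, q, lam)` is an energy sharing market equilibrium, then `d` is an optimal
solution of the centralized problem, and it is the unique optimal solution. -/
theorem equilibrium_demand_is_unique_central_optimum
    (U : K → ℝ → ℝ) (df w Dlo Dhi : K → ℝ) (a : ℝ) (F : Set (K → ℝ))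
    (hU : ∀ k, StrictConvexOn ℝ Set.univ (U k))
    (hUcont : ∀ k, Continuous (U k))
    (ha : 0 < a)
    (hFne : F.Nonempty) (hFclosed : IsClosed F) (hFconvex : Convex ℝ F)
    (hD : ∀ k, Dlo k ≤ Dhi k)
    (d b q lam : K → ℝ)
    (heq : IsEquilibrium U df w Dlo Dhi a F d b q lam) :
    (CentralFeasible df w Dlo Dhi F d ∧
      ∀ d' : K → ℝ, CentralFeasible df w Dlo Dhi F d' →
        ∑ k, U k (d k) ≤ ∑ k, U k (d' k)) ∧
    (∀ d' : K → ℝ,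
      (CentralFeasible df w Dlo Dhi F d' ∧
        ∀ d'' : K → ℝ, CentralFeasible df w Dlo Dhi F d'' →
          ∑ k, U k (d' k) ≤ ∑ k, U k (d'' k)) → d' = d) :=
  equilibrium_demand_is_unique_central_optimum_general U df w Dlo Dhi a F hU ha hFconvex d b q lam
    heq
end

section
/- If (d*, b*, q*, λ*) is an energy sharing market equilibrium, then the following variational conditions hold with η̂ = λ*, d̂ = d*, q̂ = q*: (i) for every k ∈ K and every d_k ∈ [D̲_k, D̄_k], U_k(d_k) − U_k(d̂_k) + (d_k − d̂_k) η̂_k ≥ 0; and (ii) for every q ∈ F, Σ_{k∈K} (q_k − q̂_k) η̂_k ≤ 0. -/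
open Finset

variable {K : Type*} [Fintype K]

/-- variational conditions at an equilibrium.
If `(d, b, q, lam)` is an energy sharing market equilibrium, then with `η̂ = lam`,
`d̂ = d`, `q̂ = q`: (i) for every `k` and every `dk ∈ [Dlo k, Dhi k]`,
`U k dk − U k (d k) + (dk − d k) * lam k ≥ 0`; and (ii) for every `q' ∈ F`,
`∑ k, (q' k − q k) * lam k ≤ 0`. -/
theorem equilibrium_variational_conditions
    (U : K → ℝ → ℝ) (df w Dlo Dhi : K → ℝ) (a : ℝ) (F : Set (K → ℝ))
    (hU : ∀ k, StrictConvexOn ℝ Set.univ (U k))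
    (hUcont : ∀ k, Continuous (U k))
    (ha : 0 < a)
    (hFne : F.Nonempty) (hFclosed : IsClosed F) (hFconvex : Convex ℝ F)
    (hD : ∀ k, Dlo k ≤ Dhi k)
    (d b q lam : K → ℝ)
    (heq : IsEquilibrium U df w Dlo Dhi a F d b q lam) :
    (∀ k, ∀ dk : ℝ, Dlo k ≤ dk → dk ≤ Dhi k →
      0 ≤ U k dk - U k (d k) + (dk - d k) * lam k) ∧
    (∀ q' ∈ F, ∑ k, (q' k - q k) * lam k ≤ 0) := by
  obtain ⟨hcust, hop1, hop2⟩ := heq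
  constructor
  · intro k dk h1 h2
    obtain ⟨hq, hbal, hlo, hhi, hmin⟩ := hcust k
    have hqk : q k = d k + df k - w k := by linarith
    have hkey := hmin dk ((dk + df k - w k) + a * lam k) (dk + df k - w k)
      (by ring) (by ring) h1 h2
    have hsub : lam k * (dk + df k - w k) - lam k * q k = (dk - d k) * lam k := by
      rw [hqk]; ring
    linarith [hkey, hsub]
  · intro q' hq'
    have hqF : q ∈ F := by
      have hqeq : (fun k => -a * lam k + b k) = q := by
        funext k; exact ((hcust k).1).symm
      rwa [hqeq] at hop1
    set c : K → ℝ := fun k => (q' k - q k) / a with hc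
    have hac : ∀ k, a * c k = q' k - q k := by
      intro k; rw [hc]; field_simp
    set S : ℝ := ∑ k, lam k * c k with hS
    set C : ℝ := ∑ k, c k ^ 2 with hC
    have hC0 : 0 ≤ C := Finset.sum_nonneg fun k _ => sq_nonneg _
    have key : ∀ t : ℝ, 0 < t → t ≤ 1 → S ≤ t * C / 2 := by
      intro t ht0p ht1
      have ht0 : (0:ℝ) ≤ t := ht0p.le
      have hmem : (fun k => -a * (lam k - t * c k) + b k) ∈ F := by
        have h2 : (1 - t) • q + t • q' ∈ F :=
          hFconvex hqF hq' (by linarith) ht0 (by ring)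
        convert h2 using 1
        funext k
        have hhq : q k = -a * lam k + b k := (hcust k).1
        have := hac k
        simp only [Pi.add_apply, Pi.smul_apply, smul_eq_mul]
        linear_combination -hhq + t * this
      have hle := hop2 (fun k => lam k - t * c k) hmem
      have hexp : ∑ k, (lam k - t * c k) ^ 2
          = ∑ k, lam k ^ 2 - 2 * t * S + t ^ 2 * C := by
        rw [hS, hC, Finset.mul_sum, Finset.mul_sum, ← Finset.sum_sub_distrib,
          ← Finset.sum_add_distrib]
        exact Finset.sum_congr rfl fun k _ => by ring
      rw [hexp] at hle
      have h2 : 2 * t * S ≤ t ^ 2 * C := by linarith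
      nlinarith [h2, ht0p]
    have hS0 : S ≤ 0 := by
      by_contra hpos
      push_neg at hpos
      rcases eq_or_lt_of_le hC0 with hCz | hCp
      · have := key 1 one_pos le_rfl
        rw [← hCz] at this
        linarith
      · have ht0 : 0 < min 1 (S / C) := lt_min one_pos (div_pos hpos hCp)
        have := key (min 1 (S / C)) ht0 (min_le_left _ _)
        have h2 : min 1 (S / C) * C ≤ (S / C) * C :=
          mul_le_mul_of_nonneg_right (min_le_right _ _) hC0
        rw [div_mul_cancel₀ _ hCp.ne'] at h2
        linarith
    have : ∑ k, (q' k - q k) * lam k = a * S := by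
      rw [hS, Finset.mul_sum]
      exact Finset.sum_congr rfl fun k _ => by rw [← hac k]; ring
    rw [this]
    exact mul_nonpos_of_nonneg_of_nonpos ha.le hS0
end

section
/- Suppose 0 ∈ F and (d*, b*, q*, λ*) is an energy sharing market equilibrium. Then the total net payment of all customers in the energy sharing market is non-negative: Σ_{k∈K} λ*_k q*_k ≥ 0. -/
open Finset

variable {K : Type*} [Fintype K]

/-- Proposition 3, non-negative total net payment.
If `0 ∈ F` and `(d, b, q, lam)` is an energy sharing market equilibrium, then the
total net payment of all customers is non-negative: `∑ k, lam k * q k ≥ 0`. -/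
theorem equilibrium_total_payment_nonneg
    (U : K → ℝ → ℝ) (df w Dlo Dhi : K → ℝ) (a : ℝ) (F : Set (K → ℝ))
    (hU : ∀ k, StrictConvexOn ℝ Set.univ (U k))
    (hUcont : ∀ k, Continuous (U k))
    (ha : 0 < a)
    (hFne : F.Nonempty) (hFclosed : IsClosed F) (hFconvex : Convex ℝ F)
    (hD : ∀ k, Dlo k ≤ Dhi k)
    (hF0 : (0 : K → ℝ) ∈ F)
    (d b q lam : K → ℝ)
    (heq : IsEquilibrium U df w Dlo Dhi a F d b q lam) :
    0 ≤ ∑ k, lam k * q k := by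
  obtain ⟨hcust, hopF, hopOpt⟩ := heq
  have hqdef : ∀ k, q k = -a * lam k + b k := fun k => (hcust k).1
  have hqF : q ∈ F := by
    have : (fun k => -a * lam k + b k) = q := funext fun k => (hqdef k).symm
    rwa [this] at hopF
  by_contra hS
  push_neg at hS
  set S := ∑ k, lam k * q k with hSdef
  set Q := ∑ k, q k ^ 2 with hQdef
  have key : ∀ t : ℝ, 0 ≤ t → t ≤ 1 → 0 ≤ 2 * t * a * S + t ^ 2 * Q := by
    intro t ht0 ht1
    have hmem : (fun k => -a * (lam k + t * q k / a) + b k) ∈ F := by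
      have h1 : (fun k => -a * (lam k + t * q k / a) + b k)
          = (1 - t) • q + t • (0 : K → ℝ) := by
        funext k
        have hk := hqdef k
        simp only [Pi.add_apply, Pi.smul_apply, smul_eq_mul, Pi.zero_apply]
        have hexp : -a * (lam k + t * q k / a) = -a * lam k - t * q k := by
          field_simp
          ring
        rw [hexp]
        linarith [hk]
      rw [h1]
      exact hFconvex hqF hF0 (by linarith) ht0 (by ring)
    have h2 := hopOpt (fun k => lam k + t * q k / a) hmem
    have h4 : a ^ 2 * ∑ k, (lam k) ^ 2 ≤ a ^ 2 * ∑ k, (lam k + t * q k / a) ^ 2 :=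
      mul_le_mul_of_nonneg_left h2 (sq_nonneg a)
    have h5 : a ^ 2 * ∑ k, (lam k + t * q k / a) ^ 2
        = ∑ k, (a * lam k + t * q k) ^ 2 := by
      rw [Finset.mul_sum]
      refine Finset.sum_congr rfl fun k _ => ?_
      have : a * (lam k + t * q k / a) = a * lam k + t * q k := by
        field_simp
      calc a ^ 2 * (lam k + t * q k / a) ^ 2
          = (a * (lam k + t * q k / a)) ^ 2 := by ring
        _ = (a * lam k + t * q k) ^ 2 := by rw [this]
    have h6 : ∑ k, (a * lam k + t * q k) ^ 2
        = a ^ 2 * ∑ k, (lam k) ^ 2 + 2 * t * a * S + t ^ 2 * Q := by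
      rw [hSdef, hQdef, Finset.mul_sum, Finset.mul_sum, Finset.mul_sum,
        ← Finset.sum_add_distrib, ← Finset.sum_add_distrib]
      exact Finset.sum_congr rfl fun k _ => by ring
    rw [h5, h6] at h4
    linarith
  have hQ0 : 0 ≤ Q := Finset.sum_nonneg fun k _ => sq_nonneg _
  rcases eq_or_lt_of_le hQ0 with hQeq | hQpos
  · have hq0 : ∀ k, q k = 0 := by
      intro k
      have h := (Finset.sum_eq_zero_iff_of_nonneg
        (fun k _ => sq_nonneg (q k))).mp hQeq.symm k (Finset.mem_univ k)
      exact pow_eq_zero_iff (two_ne_zero) |>.mp h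
    have : S = 0 := Finset.sum_eq_zero fun k _ => by rw [hq0 k, mul_zero]
    linarith
  · set t : ℝ := min 1 (-(a * S) / Q) with htdef
    have haS : a * S < 0 := mul_neg_of_pos_of_neg ha hS
    have ht0 : 0 < t := lt_min one_pos (div_pos (by linarith) hQpos)
    have ht1 : t ≤ 1 := min_le_left _ _
    have hk := key t ht0.le ht1
    rcases le_total (-(a * S) / Q) 1 with hc | hc
    · have hteq : t = -(a * S) / Q := min_eq_right hc
      have htQ : t * Q = -(a * S) := by
        rw [hteq, div_mul_cancel₀ _ (ne_of_gt hQpos)]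
      have h2 : t ^ 2 * Q = t * -(a * S) := by
        rw [pow_two, mul_assoc, htQ]
      have hpos : 0 < t * (a * -S) := mul_pos ht0 (mul_pos ha (by linarith))
      nlinarith
    · have hteq : t = 1 := min_eq_left hc
      have hQle : Q ≤ -(a * S) := by linarith [(le_div_iff₀ hQpos).mp hc]
      rw [hteq] at hk
      nlinarith
end

section
/- Let u, u' ∈ {0,1}^{J×T} be two binary connection strategies and suppose w ∈ W(u'). Then the projected scenario u∘w, defined componentwise by (u∘w)_{kt} = u_{kt} w_{kt}, belongs to W(u·u'), where (u·u')_{kt} = u_{kt} u'_{kt}. In particular, if w ∈ W(𝟙) (all renewable generators connected), then u∘w ∈ W(u) for every binary u. -/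
open Finset

variable {J T : Type*} [Fintype J] [Fintype T]

/-- Membership in the endogenous uncertainty set `W(u)`:
`W̲_{kt} u_{kt} ≤ w_{kt} ≤ W̄_{kt} u_{kt}` for all `k, t`, together with the spatial
and temporal budget constraints, where `w^e_{kt}(u) = u_{kt}(W̲_{kt}+W̄_{kt})/2` and
`w^h_{kt} = (W̄_{kt}−W̲_{kt})/2`. -/
def InUncertaintySet (Wlo Whi : J → T → ℝ) (BS BT : ℝ)
    (u : J → T → ℝ) (w : J → T → ℝ) : Prop :=
  (∀ k t, Wlo k t * u k t ≤ w k t ∧ w k t ≤ Whi k t * u k t) ∧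
  (∀ t, ∑ k, |w k t - u k t * ((Wlo k t + Whi k t) / 2)| /
      ((Whi k t - Wlo k t) / 2) ≤ BS) ∧
  (∀ k, ∑ t, |w k t - u k t * ((Wlo k t + Whi k t) / 2)| /
      ((Whi k t - Wlo k t) / 2) ≤ BT)

lemma proj_main (Wlo Whi : J → T → ℝ) (hW : ∀ k t, Wlo k t < Whi k t)
    (BS BT : ℝ)
    (u u' : J → T → ℝ)
    (hu : ∀ k t, u k t = 0 ∨ u k t = 1)
    (w : J → T → ℝ) :
    InUncertaintySet Wlo Whi BS BT u' w →
      InUncertaintySet Wlo Whi BS BT (fun k t => u k t * u' k t)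
        (fun k t => u k t * w k t) := by
  rintro ⟨h1, h2, h3⟩
  have key : ∀ k t,
      |u k t * w k t - u k t * u' k t * ((Wlo k t + Whi k t) / 2)| /
        ((Whi k t - Wlo k t) / 2)
      ≤ |w k t - u' k t * ((Wlo k t + Whi k t) / 2)| /
        ((Whi k t - Wlo k t) / 2) := by
    intro k t
    rcases hu k t with h | h
    · simp [h]
      exact div_nonneg (abs_nonneg _) (by linarith [hW k t])
    · simp [h]
  refine ⟨?_, ?_, ?_⟩
  · intro k t
    rcases hu k t with h | h
    · simp [h]
    · simpa [h] using h1 k t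
  · intro t
    exact le_trans (Finset.sum_le_sum fun k _ => key k t) (h2 t)
  · intro k
    exact le_trans (Finset.sum_le_sum fun t _ => key k t) (h3 k)

/-- projection stays in the endogenous uncertainty set.
For binary connection strategies `u, u'`: if `w ∈ W(u')`, then the projected scenario
`u∘w` (componentwise `u_{kt} w_{kt}`) belongs to `W(u·u')` (componentwise product).
In particular, if `w ∈ W(𝟙)`, then `u∘w ∈ W(u)` for every binary `u`. -/
theorem projected_scenario_mem_uncertainty_set
    (Wlo Whi : J → T → ℝ) (hW : ∀ k t, Wlo k t < Whi k t)
    (BS BT : ℝ) (hBS : 0 ≤ BS) (hBT : 0 ≤ BT)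
    (u u' : J → T → ℝ)
    (hu : ∀ k t, u k t = 0 ∨ u k t = 1)
    (hu' : ∀ k t, u' k t = 0 ∨ u' k t = 1)
    (w : J → T → ℝ) :
    (InUncertaintySet Wlo Whi BS BT u' w →
      InUncertaintySet Wlo Whi BS BT (fun k t => u k t * u' k t)
        (fun k t => u k t * w k t)) ∧
    (InUncertaintySet Wlo Whi BS BT (fun _ _ => 1) w →
      InUncertaintySet Wlo Whi BS BT u (fun k t => u k t * w k t)) := by
  refine ⟨proj_main Wlo Whi hW BS BT u u' hu w, fun h => ?_⟩
  simpa using proj_main Wlo Whi hW BS BT u (fun _ _ => 1) hu w h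
end

section
/- Suppose the robust problem has an optimal solution (x*, u*) with optimal value O*, and suppose that for every index i ∈ {1,…,N} the projected scenario u*∘w^i belongs to W(u*) and the recourse value φ(x*, u*∘w^i) is attained by some y^i ∈ Π(x*, u*∘w^i). Then the master problem value satisfies LB ≤ O*. Moreover, for any (x, u) that is feasible for the robust problem, the quantity UB := γᵀx + βᵀu + sup_{w ∈ W(u)} φ(x, w) satisfies UB ≥ O*. Hence LB ≤ O* ≤ UB. -/
open Matrix Finset

variable {n₁ n₂ m p₁ p₂ : ℕ}

/-- First-stage feasibility: `A x ≥ e` and `u` binary. -/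
def FirstStage (A : Matrix (Fin p₁) (Fin n₁) ℝ) (e : Fin p₁ → ℝ)
    (x : Fin n₁ → ℝ) (u : Fin m → ℝ) : Prop :=
  (∀ i, e i ≤ (A *ᵥ x) i) ∧ ∀ j, u j = 0 ∨ u j = 1

/-- The recourse set `Π(x, w) = {y : H y ≥ h − C x − T w}`. -/
def RecourseSet (H : Matrix (Fin p₂) (Fin n₂) ℝ) (h : Fin p₂ → ℝ)
    (C : Matrix (Fin p₂) (Fin n₁) ℝ) (Tm : Matrix (Fin p₂) (Fin m) ℝ)
    (x : Fin n₁ → ℝ) (w : Fin m → ℝ) : Set (Fin n₂ → ℝ) :=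
  {y | ∀ i, h i - (C *ᵥ x) i - (Tm *ᵥ w) i ≤ (H *ᵥ y) i}

/-- The recourse value `φ(x, w) = inf {ρᵀ y : y ∈ Π(x, w)}`. -/
noncomputable def recourseVal (ρ : Fin n₂ → ℝ)
    (H : Matrix (Fin p₂) (Fin n₂) ℝ) (h : Fin p₂ → ℝ)
    (C : Matrix (Fin p₂) (Fin n₁) ℝ) (Tm : Matrix (Fin p₂) (Fin m) ℝ)
    (x : Fin n₁ → ℝ) (w : Fin m → ℝ) : ℝ :=
  sInf ((fun y => ρ ⬝ᵥ y) '' RecourseSet H h C Tm x w)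

/-- Feasibility for the robust problem: first-stage feasibility plus nonempty
recourse for every scenario in the endogenous uncertainty set. -/
def RobustFeasible (A : Matrix (Fin p₁) (Fin n₁) ℝ) (e : Fin p₁ → ℝ)
    (H : Matrix (Fin p₂) (Fin n₂) ℝ) (h : Fin p₂ → ℝ)
    (C : Matrix (Fin p₂) (Fin n₁) ℝ) (Tm : Matrix (Fin p₂) (Fin m) ℝ)
    (W : (Fin m → ℝ) → Set (Fin m → ℝ))
    (x : Fin n₁ → ℝ) (u : Fin m → ℝ) : Prop :=
  FirstStage A e x u ∧ ∀ w ∈ W u, (RecourseSet H h C Tm x w).Nonempty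

/-- The objective value of the robust problem at `(x, u)`. -/
noncomputable def robustVal (γ : Fin n₁ → ℝ) (β : Fin m → ℝ) (ρ : Fin n₂ → ℝ)
    (H : Matrix (Fin p₂) (Fin n₂) ℝ) (h : Fin p₂ → ℝ)
    (C : Matrix (Fin p₂) (Fin n₁) ℝ) (Tm : Matrix (Fin p₂) (Fin m) ℝ)
    (W : (Fin m → ℝ) → Set (Fin m → ℝ))
    (x : Fin n₁ → ℝ) (u : Fin m → ℝ) : ℝ :=
  γ ⬝ᵥ x + β ⬝ᵥ u + sSup ((fun w => recourseVal ρ H h C Tm x w) '' W u)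

/-- The set of objective values of points feasible for the master problem with
scenario list `ws`, where each scenario is projected componentwise by `u`. -/
def MasterValues (γ : Fin n₁ → ℝ) (β : Fin m → ℝ) (ρ : Fin n₂ → ℝ)
    (A : Matrix (Fin p₁) (Fin n₁) ℝ) (e : Fin p₁ → ℝ)
    (H : Matrix (Fin p₂) (Fin n₂) ℝ) (h : Fin p₂ → ℝ)
    (C : Matrix (Fin p₂) (Fin n₁) ℝ) (Tm : Matrix (Fin p₂) (Fin m) ℝ)
    (N : ℕ) (ws : Fin N → Fin m → ℝ) : Set ℝ :=
  {v | ∃ (x : Fin n₁ → ℝ) (u : Fin m → ℝ) (τ : ℝ) (y : Fin N → Fin n₂ → ℝ),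
    FirstStage A e x u ∧
    (∀ i, y i ∈ RecourseSet H h C Tm x (fun j => u j * ws i j)) ∧
    (∀ i, ρ ⬝ᵥ y i ≤ τ) ∧
    v = γ ⬝ᵥ x + β ⬝ᵥ u + τ}

/-- master problem gives a lower bound, robust value an upper bound.
Suppose `(xs, us)` is an optimal solution of the robust problem with (real) optimal
value `Ostar`, and for every scenario index `i` the projected scenario `us ∘ ws i`
belongs to `W us` with its recourse value attained by some `ys i`. Then the master
problem value `LB` satisfies `LB ≤ Ostar`; moreover, for any `(x, u)` feasible for the
robust problem, `UB := γᵀx + βᵀu + sup_{w ∈ W u} φ(x, w) ≥ Ostar`.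
Hence `LB ≤ Ostar ≤ UB`. -/
theorem master_lower_bound_and_upper_bound
    (γ : Fin n₁ → ℝ) (β : Fin m → ℝ) (ρ : Fin n₂ → ℝ)
    (A : Matrix (Fin p₁) (Fin n₁) ℝ) (e : Fin p₁ → ℝ)
    (H : Matrix (Fin p₂) (Fin n₂) ℝ) (h : Fin p₂ → ℝ)
    (C : Matrix (Fin p₂) (Fin n₁) ℝ) (Tm : Matrix (Fin p₂) (Fin m) ℝ)
    (W : (Fin m → ℝ) → Set (Fin m → ℝ))
    -- (xs, us) is optimal for the robust problem with optimal value Ostar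
    (xs : Fin n₁ → ℝ) (us : Fin m → ℝ) (Ostar : ℝ)
    (hfeas : RobustFeasible A e H h C Tm W xs us)
    (hbdd : BddAbove ((fun w => recourseVal ρ H h C Tm xs w) '' W us))
    (hOval : Ostar = robustVal γ β ρ H h C Tm W xs us)
    (hOopt : ∀ x u, RobustFeasible A e H h C Tm W x u →
      Ostar ≤ robustVal γ β ρ H h C Tm W x u)
    -- scenario list; projected scenarios lie in W us with attained recourse values
    (N : ℕ) (ws : Fin N → Fin m → ℝ)
    (hproj : ∀ i, (fun j => us j * ws i j) ∈ W us)
    (ys : Fin N → Fin n₂ → ℝ)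
    (hattain : ∀ i, ys i ∈ RecourseSet H h C Tm xs (fun j => us j * ws i j) ∧
      recourseVal ρ H h C Tm xs (fun j => us j * ws i j) = ρ ⬝ᵥ ys i)
    -- the master problem value
    (hMbdd : BddBelow (MasterValues γ β ρ A e H h C Tm N ws))
    (LB : ℝ)
    (hLB : LB = sInf (MasterValues γ β ρ A e H h C Tm N ws)) :
    LB ≤ Ostar ∧
      ∀ x u, RobustFeasible A e H h C Tm W x u →
        Ostar ≤ γ ⬝ᵥ x + β ⬝ᵥ u +
          sSup ((fun w => recourseVal ρ H h C Tm x w) '' W u) := by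
  constructor
  · have hmem : Ostar ∈ MasterValues γ β ρ A e H h C Tm N ws := by
      refine ⟨xs, us, sSup ((fun w => recourseVal ρ H h C Tm xs w) '' W us), ys,
        hfeas.1, fun i => (hattain i).1, fun i => ?_, ?_⟩
      · rw [← (hattain i).2]
        exact le_csSup hbdd ⟨_, hproj i, rfl⟩
      · simpa [robustVal] using hOval
    rw [hLB]
    exact csInf_le hMbdd hmem
  · intro x u hxu
    simpa [robustVal] using hOopt x u hxu
end

section
/- Suppose an energy sharing market equilibrium (d*, b*, q*, λ*) exists. Then the equilibrium total disutility Σ_{k∈K} U_k(d*_k) equals the optimal value of the centralized problem. In particular, every energy sharing market equilibrium achieves the same total disutility, equal to the centrally optimal (socially optimal) cost. -/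
open Finset

variable {K : Type*} [Fintype K]

/-- Variational inequality for the operator's optimum: the resulting sharing
profile `q = -a•lam + b` is the projection of `b` onto `F`, so
`∑ k, lam k * (z k - q k) ≤ 0` for every `z ∈ F`. -/
lemma operator_vi {K : Type*} [Fintype K] (a : ℝ) (ha : 0 < a) (F : Set (K → ℝ))
    (hFconvex : Convex ℝ F) (b lam : K → ℝ) (hop : OperatorOpt a F b lam)
    (z : K → ℝ) (hz : z ∈ F) :
    ∑ k, lam k * (z k - (-a * lam k + b k)) ≤ 0 := by
  set qf : K → ℝ := fun k => -a * lam k + b k with hqf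
  have hqF : qf ∈ F := hop.1
  set e : K → ℝ := fun k => (qf k - z k) / a with he
  set s : ℝ := ∑ k, lam k * e k with hs
  set c : ℝ := ∑ k, e k ^ 2 with hc
  have hc0 : 0 ≤ c := Finset.sum_nonneg fun k _ => sq_nonneg _
  have key : ∀ t : ℝ, 0 < t → t ≤ 1 → 0 ≤ 2 * s + t * c := by
    intro t ht ht1
    have hmem : (fun k => -a * (lam k + t * e k) + b k) ∈ F := by
      have h2 := hFconvex hqF hz (by linarith : (0:ℝ) ≤ 1 - t) ht.le (by ring)
      convert h2 using 1
      funext k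
      simp only [Pi.add_apply, Pi.smul_apply, smul_eq_mul, hqf, he]
      field_simp
      ring
    have hle := hop.2 (fun k => lam k + t * e k) hmem
    have hexp : ∑ k, (lam k + t * e k) ^ 2
        = ∑ k, (lam k) ^ 2 + (2 * s * t + c * t ^ 2) := by
      rw [hs, hc, Finset.mul_sum, Finset.sum_mul, Finset.sum_mul,
        ← Finset.sum_add_distrib, ← Finset.sum_add_distrib]
      exact Finset.sum_congr rfl fun k _ => by ring
    rw [hexp] at hle
    nlinarith
  have hs0 : 0 ≤ s := by
    by_contra h
    push_neg at h
    set t : ℝ := min 1 (-s / (c + 1)) with htdef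
    have hc1 : (0:ℝ) < c + 1 := by linarith
    have ht0 : 0 < t := lt_min one_pos (div_pos (by linarith) hc1)
    have ht1 : t ≤ 1 := min_le_left _ _
    have htc : t * (c + 1) ≤ -s := by
      have h1 : t ≤ -s / (c + 1) := min_le_right _ _
      calc t * (c + 1) ≤ (-s / (c + 1)) * (c + 1) := by nlinarith
        _ = -s := by field_simp
    have := key t ht0 ht1
    nlinarith
  have hfin : ∑ k, lam k * (z k - qf k) = -a * s := by
    rw [hs, Finset.mul_sum]
    apply Finset.sum_congr rfl
    intro k _
    simp only [he]
    field_simp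
    ring
  rw [hfin]
  nlinarith

/-- equilibrium achieves the centrally optimal cost.
If an energy sharing market equilibrium `(d, b, q, lam)` exists, then the equilibrium
total disutility `∑ k, U k (d k)` equals the optimal value of the centralized problem.
In particular every equilibrium achieves the same, socially optimal, total disutility. -/
theorem equilibrium_total_disutility_eq_central_value
    (U : K → ℝ → ℝ) (df w Dlo Dhi : K → ℝ) (a : ℝ) (F : Set (K → ℝ))
    (hU : ∀ k, StrictConvexOn ℝ Set.univ (U k))
    (hUcont : ∀ k, Continuous (U k))
    (ha : 0 < a)
    (hFne : F.Nonempty) (hFclosed : IsClosed F) (hFconvex : Convex ℝ F)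
    (hD : ∀ k, Dlo k ≤ Dhi k)
    (d b q lam : K → ℝ)
    (heq : IsEquilibrium U df w Dlo Dhi a F d b q lam) :
    ∑ k, U k (d k) =
      sInf {v : ℝ | ∃ d' : K → ℝ, CentralFeasible df w Dlo Dhi F d' ∧
        v = ∑ k, U k (d' k)} := by
  obtain ⟨hcust, hop⟩ := heq
  have hq_eq : ∀ k, q k = d k + df k - w k := by
    intro k
    have h := (hcust k).2.1
    linarith
  have hqb : ∀ k, q k = -a * lam k + b k := fun k => (hcust k).1
  have hqF : q ∈ F := by
    have h := hop.1
    convert h using 1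
    funext k
    exact hqb k
  have hdfeas : CentralFeasible df w Dlo Dhi F d := by
    refine ⟨fun k => ⟨(hcust k).2.2.1, (hcust k).2.2.2.1⟩, ?_⟩
    convert hqF using 1
    funext k
    exact (hq_eq k).symm
  have hopt : ∀ d' : K → ℝ, CentralFeasible df w Dlo Dhi F d' →
      ∑ k, U k (d k) ≤ ∑ k, U k (d' k) := by
    rintro d' ⟨hbound, hF'⟩
    set q' : K → ℝ := fun k => d' k + df k - w k with hq'
    have hstep : ∀ k, U k (d k) + lam k * q k ≤ U k (d' k) + lam k * q' k := by
      intro k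
      exact (hcust k).2.2.2.2 (d' k) (q' k + a * lam k) (q' k)
        (by ring) (by simp only [hq']; ring) (hbound k).1 (hbound k).2
    have hsum : ∑ k, (U k (d k) + lam k * q k) ≤ ∑ k, (U k (d' k) + lam k * q' k) :=
      Finset.sum_le_sum fun k _ => hstep k
    rw [Finset.sum_add_distrib, Finset.sum_add_distrib] at hsum
    have hvi := operator_vi a ha F hFconvex b lam hop q' hF'
    have hrw : ∑ k, lam k * (q' k - (-a * lam k + b k))
        = ∑ k, lam k * q' k - ∑ k, lam k * q k := by
      rw [← Finset.sum_sub_distrib]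
      apply Finset.sum_congr rfl
      intro k _
      rw [← hqb k]
      ring
    rw [hrw] at hvi
    linarith
  have hmem : ∑ k, U k (d k) ∈ {v : ℝ | ∃ d' : K → ℝ,
      CentralFeasible df w Dlo Dhi F d' ∧ v = ∑ k, U k (d' k)} :=
    ⟨d, hdfeas, rfl⟩
  have hlb : ∀ v ∈ {v : ℝ | ∃ d' : K → ℝ,
      CentralFeasible df w Dlo Dhi F d' ∧ v = ∑ k, U k (d' k)},
      ∑ k, U k (d k) ≤ v := by
    rintro v ⟨d', hd', rfl⟩
    exact hopt d' hd'
  exact le_antisymm (le_csInf ⟨_, hmem⟩ hlb) (csInf_le ⟨_, hlb⟩ hmem)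
end
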